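/- Let $G_1$ be a finite simple graph on vertex set $\{1,\ldots,n\}$ and $G_2$ a finite simple graph on vertex set $\{n+1,\ldots,n+m\}$, and assume that $n$ is a free vertex of $G_1$ and $n+m$ is a free vertex of $G_2$. Let $G' = G_1 \cup G_2$ be their disjoint union and $S' = K[x_1,\ldots,x_{n+m},y_1,\ldots,y_{n+m}]$. Then for every minimal prime $P$ of $J_{G'}$, the ideal $P + (x_n - x_{n+m})$ is a prime ideal of $S'$. -/

import Mathlib

open MvPolynomial

/-- The binomial edge ideal of a simple graph `G` on vertex set `V`, inside the
polynomial ring `K[x_v, y_v : v ∈ V]`, realized as `MvPolynomial (V ⊕ V) K` where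
`X (Sum.inl v)` plays the role of `x_v` and `X (Sum.inr v)` the role of `y_v`. -/
noncomputable def binomialEdgeIdeal {V : Type*} (K : Type*) [CommRing K]
    (G : SimpleGraph V) : Ideal (MvPolynomial (V ⊕ V) K) :=
  Ideal.span {f | ∃ i j, G.Adj i j ∧
    f = X (Sum.inl i) * X (Sum.inr j) - X (Sum.inl j) * X (Sum.inr i)}

/-- A vertex `v` of `G` is a free vertex if its neighborhood induces a complete
subgraph of `G`. -/
def SimpleGraph.IsFreeVertex {V : Type*} (G : SimpleGraph V) (v : V) : Prop :=
  ∀ u w, G.Adj v u → G.Adj v w → u ≠ w → G.Adj u w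

/-!
A minimal prime `P` of `J_G` is `P_S(G)` for `S = {v | x_v, y_v ∈ P}`, and a free vertex never
lies in this `S`: removing it from `S` gives a prime `P_{S \ {v}}(G) ⊆ P_S(G)` still containing
`J_G`. Now `P_S(G)` is the kernel of the monomial map `x_v ↦ s_C t_v`, `y_v ↦ t_v` (`C` the
component of `v` in `G - S`, the variables of `S` sent to `0`). Here `a = n` and `b = n + m`
lie in different components `C_a`, `C_b`, and composing with `s_{C_b} ↦ s_{C_a} t_a`,
`s_{C_a} ↦ s_{C_a} t_b` gives a monomial map whose kernel is `P_S(G) + (x_a - x_b)`, which is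
therefore prime. Both kernels are spanned by monomials and differences of monomials with the same
image; such differences are reached by the moves `x_i y_j ↔ x_j y_i` inside a component and, in
the glued case, `x_a ↔ x_b`.
-/

open Finsupp (linearCombination supported single)

section MonomialMap

variable {σ W K : Type*} [CommRing K]

lemma Finsupp.exists_eq_add_single {d : σ →₀ ℕ} {z : σ} (h : d z ≠ 0) :
    ∃ f, d = f + single z 1 := by
  obtain ⟨f, hf⟩ := exists_add_of_le (Finsupp.single_le_iff.2 (Nat.one_le_iff_ne_zero.2 h))
  exact ⟨f, hf.trans (add_comm _ _)⟩

lemma Finsupp.mem_supported_of_le {s : Set σ} {f d : σ →₀ ℕ} (hfd : f ≤ d)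
    (hd : d ∈ supported ℕ ℕ s) : f ∈ supported ℕ ℕ s :=
  fun _ hz => hd (Finsupp.support_mono hfd hz)

lemma Finsupp.linearCombination_apply_ne_zero_iff {E : σ → W →₀ ℕ} {d : σ →₀ ℕ} {w : W} :
    linearCombination ℕ E d w ≠ 0 ↔ ∃ z, d z ≠ 0 ∧ E z w ≠ 0 := by
  simp [Finsupp.linearCombination_apply, Finsupp.sum, Finset.sum_eq_zero_iff]

variable (K) in
noncomputable def monomialMap (s : Set σ) (E : σ → W →₀ ℕ) :
    MvPolynomial σ K →ₐ[K] MvPolynomial W K :=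
  open Classical in aeval fun z => if z ∈ s then monomial (E z) 1 else 0

variable {s : Set σ} {E : σ → W →₀ ℕ}

lemma monomialMap_X {z : σ} (hz : z ∈ s) : monomialMap K s E (X z) = monomial (E z) 1 := by
  simp [monomialMap, hz]

lemma monomialMap_X_of_notMem {z : σ} (hz : z ∉ s) : monomialMap K s E (X z) = 0 := by
  simp [monomialMap, hz]

lemma monomialMap_monomial {d : σ →₀ ℕ} (hd : d ∈ supported ℕ ℕ s) (c : K) :
    monomialMap K s E (monomial d c) = monomial (linearCombination ℕ E d) c := by
  classical
  rw [monomialMap, aeval_monomial, Finsupp.linearCombination_apply, monomial_finsupp_sum_index,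
    algebraMap_eq]
  congr 1
  refine Finsupp.prod_congr fun z hz => ?_
  rw [if_pos (hd hz), monomial_pow, one_pow]

lemma monomial_mem_of_notMem_supported {I : Ideal (MvPolynomial σ K)} (hX : ∀ z ∉ s, X z ∈ I)
    {d : σ →₀ ℕ} (hd : d ∉ supported ℕ ℕ s) (c : K) : monomial d c ∈ I := by
  obtain ⟨z, hz, hzs⟩ := Set.not_subset.1 ((Finsupp.mem_supported ℕ d).not.1 hd)
  exact I.mem_of_dvd (X_dvd_monomial.2 (Or.inr (Finsupp.mem_support_iff.1 hz))) (hX z hzs)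

lemma sum_monomial_mem_of_sum_eq_zero {I : Ideal (MvPolynomial σ K)} {F : Finset (σ →₀ ℕ)}
    {c : (σ →₀ ℕ) → K} (hF : ∀ d ∈ F, ∀ d' ∈ F, monomial d (1 : K) ≡ monomial d' 1 [SMOD I])
    (hc : ∑ d ∈ F, c d = 0) : ∑ d ∈ F, monomial d (c d) ∈ I := by
  obtain rfl | ⟨d₀, hd₀⟩ := F.eq_empty_or_nonempty
  · simp
  have : ∑ d ∈ F, monomial d (c d) = ∑ d ∈ F, C (c d) * (monomial d 1 - monomial d₀ 1) := by
    simp only [mul_sub, C_mul_monomial, mul_one, Finset.sum_sub_distrib, ← map_sum, hc,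
      map_zero, sub_zero]
  rw [this]
  exact I.sum_mem fun d hd => I.mul_mem_left _ (SModEq.sub_mem.1 (hF d hd d₀ hd₀))

theorem ker_monomialMap_eq {I : Ideal (MvPolynomial σ K)}
    (hI : I ≤ RingHom.ker (monomialMap K s E)) (hX : ∀ z ∉ s, X z ∈ I)
    (hfib : ∀ d ∈ supported ℕ ℕ s, ∀ d' ∈ supported ℕ ℕ s,
      linearCombination ℕ E d = linearCombination ℕ E d' →
        monomial d (1 : K) ≡ monomial d' 1 [SMOD I]) :
    RingHom.ker (monomialMap K s E) = I := by
  classical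
  refine le_antisymm (fun f hf => ?_) hI
  set A := f.support.filter (· ∈ supported ℕ ℕ s)
  have hdirty : ∑ d ∈ f.support.filter (· ∉ supported ℕ ℕ s), monomial d (f.coeff d) ∈ I :=
    I.sum_mem fun d hd => monomial_mem_of_notMem_supported hX (Finset.mem_filter.1 hd).2 _
  rw [f.as_sum, ← Finset.sum_filter_add_sum_filter_not f.support (· ∈ supported ℕ ℕ s)] at hf ⊢
  refine add_mem ?_ hdirty
  have hclean : ∑ d ∈ A, monomial (linearCombination ℕ E d) (f.coeff d) = 0 := by
    rw [RingHom.mem_ker, map_add, hI hdirty, add_zero, map_sum] at hf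
    rwa [Finset.sum_congr rfl fun d hd => monomialMap_monomial (Finset.mem_filter.1 hd).2 _] at hf
  -- grouped by their image, the remaining monomials have coefficient sums zero
  rw [← Finset.sum_fiberwise_of_maps_to fun d hd => Finset.mem_image_of_mem
    (linearCombination ℕ E) hd]
  refine I.sum_mem fun w _ => sum_monomial_mem_of_sum_eq_zero ?_ ?_
  · simp only [Finset.mem_filter]
    exact fun d hd d' hd' => hfib d hd.1.2 d' hd'.1.2 (hd.2.trans hd'.2.symm)
  · have := congr_arg (coeff w) hclean
    simp only [coeff_sum, coeff_monomial, coeff_zero] at this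
    rwa [Finset.sum_filter]

end MonomialMap

namespace SimpleGraph

variable {V : Type*} (G : SimpleGraph V)

/-- The graph `G - S` of the paper, with the vertices of `S` kept as isolated vertices. -/
def isolate (S : Set V) : SimpleGraph V where
  Adj i j := G.Adj i j ∧ i ∉ S ∧ j ∉ S
  symm := ⟨fun _ _ h => ⟨h.1.symm, h.2.2, h.2.1⟩⟩
  loopless := ⟨fun i h => G.loopless.irrefl i h.1⟩

variable {G}

lemma isolate_le (S : Set V) : G.isolate S ≤ G := fun _ _ h => h.1

lemma notMem_of_reachable_isolate {S : Set V} {i j : V} (h : (G.isolate S).Reachable i j)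
    (hij : i ≠ j) : i ∉ S := by
  obtain ⟨w⟩ := h
  cases w with
  | nil => exact absurd rfl hij
  | cons h _ => exact h.2.1

lemma reachable_isolate_of_isFreeVertex {S : Set V} {a : V} (ha : G.IsFreeVertex a) {i j : V}
    (h : (G.isolate (S \ {a})).Reachable i j) (hi : i ≠ a) (hj : j ≠ a) :
    (G.isolate S).Reachable i j := by
  have hS : ∀ {k}, k ∉ S \ {a} → k ≠ a → k ∉ S := fun hk hka hkS => hk ⟨hkS, hka⟩
  have hclique : ∀ k l, (G.isolate (S \ {a})).Adj a k → (G.isolate (S \ {a})).Adj a l →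
      (G.isolate S).Reachable k l := by
    intro k l hk hl
    obtain rfl | hkl := eq_or_ne k l
    · rfl
    have hkl' : (G.isolate S).Adj k l := ⟨ha k l hk.1 hl.1 hkl,
      hS hk.2.2 (G.ne_of_adj hk.1).symm, hS hl.2.2 (G.ne_of_adj hl.1).symm⟩
    exact hkl'.reachable
  -- a walk through `a` skips it, as the neighbours of `a` form a clique
  have key : ∀ {i j} (w : (G.isolate (S \ {a})).Walk i j), j ≠ a →
      (i ≠ a → (G.isolate S).Reachable i j) ∧
        (i = a → ∀ k, (G.isolate (S \ {a})).Adj a k → (G.isolate S).Reachable k j) := by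
    intro i j w hj
    induction w with
    | nil => exact ⟨fun _ => Reachable.refl _, fun h => absurd h hj⟩
    | @cons i m j h p ih =>
      obtain ⟨ih₁, ih₂⟩ := ih hj
      refine ⟨fun hi => ?_, ?_⟩
      · obtain rfl | hm := eq_or_ne m a
        · exact ih₂ rfl i h.symm
        · have him : (G.isolate S).Adj i m := ⟨h.1, hS h.2.1 hi, hS h.2.2 hm⟩
          exact him.reachable.trans (ih₁ hm)
      · rintro rfl k hk
        exact (hclique k m hk h).trans (ih₁ (G.ne_of_adj h.1).symm)
  obtain ⟨w⟩ := h
  exact (key w hj).1 hi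

lemma IsFreeVertex.sum_inl {V' : Type*} {H : SimpleGraph V'} {v : V} (h : G.IsFreeVertex v) :
    (G.sum H).IsFreeVertex (Sum.inl v) := by
  rintro (u | u) (w | w) hu hw huw <;> simp_all
  exact h u w hu hw huw

lemma IsFreeVertex.sum_inr {V' : Type*} {H : SimpleGraph V'} {v : V'} (h : H.IsFreeVertex v) :
    (G.sum H).IsFreeVertex (Sum.inr v) := by
  rintro (u | u) (w | w) hu hw huw <;> simp_all
  exact h u w hu hw huw

end SimpleGraph

section BinomialEdgePrime

open SimpleGraph

variable {V K : Type*} [CommRing K] {G : SimpleGraph V} {S : Set V}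

def vertexVars (T : Set V) : Set (V ⊕ V) := Sum.elim id id ⁻¹' T

variable (K) in
noncomputable def edgeBinomial (i j : V) : MvPolynomial (V ⊕ V) K :=
  X (Sum.inl i) * X (Sum.inr j) - X (Sum.inl j) * X (Sum.inr i)

variable (K G S) in
/-- The prime `P_S(G)` of Herzog–Hibi–Hreinsdóttir–Kahle–Rauh. -/
noncomputable def binomialEdgePrime : Ideal (MvPolynomial (V ⊕ V) K) :=
  Ideal.span (X '' vertexVars S ∪
    {f | ∃ i j, (G.isolate S).Reachable i j ∧ f = edgeBinomial K i j})

lemma edgeBinomial_self (i : V) : edgeBinomial K i i = 0 := sub_self _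

lemma edgeBinomial_swap (i j : V) : edgeBinomial K j i = -edgeBinomial K i j :=
  (neg_sub _ _).symm

lemma edgeBinomial_mem_of_X_mem {I : Ideal (MvPolynomial (V ⊕ V) K)} {i : V}
    (hx : X (Sum.inl i) ∈ I) (hy : X (Sum.inr i) ∈ I) (j : V) : edgeBinomial K i j ∈ I :=
  I.sub_mem (I.mul_mem_right _ hx) (I.mul_mem_left _ hy)

lemma edgeBinomial_mem_of_mem_of_mem {Q : Ideal (MvPolynomial (V ⊕ V) K)} [hQ : Q.IsPrime]
    {i j k : V} (hik : edgeBinomial K i k ∈ Q) (hkj : edgeBinomial K k j ∈ Q)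
    (hk : ¬(X (Sum.inl k) ∈ Q ∧ X (Sum.inr k) ∈ Q)) : edgeBinomial K i j ∈ Q := by
  have hx : X (Sum.inl k) * edgeBinomial K i j =
      X (Sum.inl j) * edgeBinomial K i k + X (Sum.inl i) * edgeBinomial K k j := by
    simp only [edgeBinomial]; ring
  have hy : X (Sum.inr k) * edgeBinomial K i j =
      X (Sum.inr j) * edgeBinomial K i k + X (Sum.inr i) * edgeBinomial K k j := by
    simp only [edgeBinomial]; ring
  have mem : ∀ p q r : MvPolynomial (V ⊕ V) K,
      p * edgeBinomial K i j = q * edgeBinomial K i k + r * edgeBinomial K k j →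
        p ∈ Q ∨ edgeBinomial K i j ∈ Q := fun p q r h =>
    hQ.mem_or_mem (h ▸ Q.add_mem (Q.mul_mem_left _ hik) (Q.mul_mem_left _ hkj))
  by_contra h
  exact hk ⟨(mem _ _ _ hx).resolve_right h, (mem _ _ _ hy).resolve_right h⟩

variable (G) in
lemma X_mem_binomialEdgePrime {z : V ⊕ V} (hz : z ∈ vertexVars S) :
    X z ∈ binomialEdgePrime K G S :=
  Ideal.subset_span (Or.inl ⟨z, hz, rfl⟩)

lemma edgeBinomial_mem_binomialEdgePrime {i j : V} (h : (G.isolate S).Reachable i j) :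
    edgeBinomial K i j ∈ binomialEdgePrime K G S :=
  Ideal.subset_span (Or.inr ⟨i, j, h, rfl⟩)

variable (G S) in
lemma binomialEdgeIdeal_le_binomialEdgePrime :
    binomialEdgeIdeal K G ≤ binomialEdgePrime K G S := by
  rw [binomialEdgeIdeal, Ideal.span_le]
  rintro f ⟨i, j, hij, rfl⟩
  change edgeBinomial K i j ∈ binomialEdgePrime K G S
  by_cases hi : i ∈ S
  · exact edgeBinomial_mem_of_X_mem (X_mem_binomialEdgePrime G hi)
      (X_mem_binomialEdgePrime G hi) j
  by_cases hj : j ∈ S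
  · rw [← neg_mem_iff, ← edgeBinomial_swap]
    exact edgeBinomial_mem_of_X_mem (X_mem_binomialEdgePrime G hj)
      (X_mem_binomialEdgePrime G hj) i
  have hij' : (G.isolate S).Adj i j := ⟨hij, hi, hj⟩
  exact edgeBinomial_mem_binomialEdgePrime hij'.reachable

variable (G S) in
/-- Exponents of the monomial map `x_v ↦ s_C t_v`, `y_v ↦ t_v` with kernel `P_S(G)`, where `C` is
the component of `v` in `G.isolate S`, `s_C = X (Sum.inl C)` and `t_v = X (Sum.inr v)`. -/
noncomputable def componentExp : V ⊕ V → ((G.isolate S).ConnectedComponent ⊕ V →₀ ℕ) :=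
  Sum.elim (fun v => single (Sum.inl ((G.isolate S).connectedComponentMk v)) 1 +
    single (Sum.inr v) 1) fun v => single (Sum.inr v) 1

local notation "cc" => SimpleGraph.connectedComponentMk (G.isolate S)
local notation "τ" => linearCombination ℕ (componentExp G S)

lemma componentExp_inl (v : V) :
    componentExp G S (Sum.inl v) = single (Sum.inl (cc v)) 1 + single (Sum.inr v) 1 := rfl

lemma binomialEdgePrime_le_ker {W : Type*}
    (L : ((G.isolate S).ConnectedComponent ⊕ V →₀ ℕ) →ₗ[ℕ] (W →₀ ℕ)) :
    binomialEdgePrime K G S ≤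
      RingHom.ker (monomialMap K (vertexVars Sᶜ) (L ∘ componentExp G S)) := by
  rw [binomialEdgePrime, Ideal.span_le]
  rintro f (⟨z, hz, rfl⟩ | ⟨i, j, hr, rfl⟩)
  · exact monomialMap_X_of_notMem (by simpa [vertexVars] using hz)
  obtain rfl | hij := eq_or_ne i j
  · simp [edgeBinomial_self]
  have hi : Sum.inl i ∈ vertexVars Sᶜ := notMem_of_reachable_isolate hr hij
  have hj : Sum.inl j ∈ vertexVars Sᶜ := notMem_of_reachable_isolate hr.symm hij.symm
  simp only [SetLike.mem_coe, RingHom.mem_ker, edgeBinomial, map_sub, map_mul]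
  rw [monomialMap_X hi, monomialMap_X hj, monomialMap_X (z := Sum.inr i) hi,
    monomialMap_X (z := Sum.inr j) hj, monomial_mul, monomial_mul, sub_eq_zero]
  simp only [Function.comp_apply, componentExp, Sum.elim_inl, Sum.elim_inr, map_add,
    ConnectedComponent.sound hr]
  rw [add_right_comm]

variable (G) in
lemma X_inl_notMem_binomialEdgePrime [Nontrivial K] {v : V} (hv : v ∉ S) :
    X (Sum.inl v) ∉ binomialEdgePrime K G S := fun h => by
  have := binomialEdgePrime_le_ker LinearMap.id h
  rw [RingHom.mem_ker, monomialMap_X (show Sum.inl v ∈ vertexVars Sᶜ from hv)] at this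
  exact one_ne_zero (monomial_eq_zero.1 this)

lemma linearCombination_componentExp_inr (d : V ⊕ V →₀ ℕ) (v : V) :
    τ d (Sum.inr v) = d (Sum.inl v) + d (Sum.inr v) := by
  induction d using Finsupp.induction_linear with
  | zero => simp
  | add f g hf hg => simp only [map_add, Finsupp.add_apply, hf, hg]; ring
  | single z k => classical cases z <;> simp [componentExp, Finsupp.single_apply, eq_comm]

lemma linearCombination_componentExp_inl_ne_zero_iff (d : V ⊕ V →₀ ℕ)
    (C : (G.isolate S).ConnectedComponent) :
    τ d (Sum.inl C) ≠ 0 ↔ ∃ k, cc k = C ∧ d (Sum.inl k) ≠ 0 := by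
  classical
  rw [Finsupp.linearCombination_apply_ne_zero_iff]
  constructor
  · rintro ⟨z | z, hz, hE⟩ <;> simp [componentExp, Finsupp.single_apply] at hE
    exact ⟨z, hE, hz⟩
  · rintro ⟨k, rfl, hk⟩
    exact ⟨Sum.inl k, hk, by simp [componentExp]⟩

lemma exists_sModEq_binomialEdgePrime_X_inl_ne_zero {d : V ⊕ V →₀ ℕ}
    (hd : d ∈ supported ℕ ℕ (vertexVars Sᶜ)) {i : V} (hC : τ d (Sum.inl (cc i)) ≠ 0)
    (hi : τ d (Sum.inr i) ≠ 0) :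
    ∃ d₁ ∈ supported ℕ ℕ (vertexVars Sᶜ), d₁.degree = d.degree ∧ τ d₁ = τ d ∧
      monomial d (1 : K) ≡ monomial d₁ 1 [SMOD binomialEdgePrime K G S] ∧ d₁ (Sum.inl i) ≠ 0 := by
  classical
  by_cases hxi : d (Sum.inl i) ≠ 0
  · exact ⟨d, hd, rfl, rfl, SModEq.rfl, hxi⟩
  rw [not_not] at hxi
  obtain ⟨k, hk, hxk⟩ := (linearCombination_componentExp_inl_ne_zero_iff d _).1 hC
  have hyi : d (Sum.inr i) ≠ 0 := by
    rwa [linearCombination_componentExp_inr, hxi, zero_add] at hi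
  have hkS : Sum.inl k ∈ vertexVars Sᶜ := hd (Finsupp.mem_support_iff.2 hxk)
  have hiS : Sum.inr i ∈ vertexVars Sᶜ := hd (Finsupp.mem_support_iff.2 hyi)
  obtain ⟨f₁, rfl⟩ := Finsupp.exists_eq_add_single hxk
  obtain ⟨f, rfl⟩ := Finsupp.exists_eq_add_single (z := Sum.inr i) (d := f₁)
    (by simpa [Finsupp.single_apply] using hyi)
  -- swap `x_k y_i` for `x_i y_k`
  refine ⟨f + single (Sum.inl i) 1 + single (Sum.inr k) 1, add_mem (add_mem
    (Finsupp.mem_supported_of_le (le_self_add.trans le_self_add) hd)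
    (Finsupp.single_mem_supported ℕ 1 hiS)) (Finsupp.single_mem_supported ℕ 1 hkS),
    by simp, ?_, ?_, by simp⟩
  · simp only [map_add, Finsupp.linearCombination_single, one_smul, componentExp, Sum.elim_inl,
      Sum.elim_inr, hk]
    abel
  · rw [SModEq.sub_mem]
    simp only [monomial_add_single, pow_one]
    have : monomial f (1 : K) * X (Sum.inr i) * X (Sum.inl k) -
        monomial f 1 * X (Sum.inl i) * X (Sum.inr k) = monomial f 1 * edgeBinomial K k i := by
      simp only [edgeBinomial]; ring
    rw [this]
    exact Ideal.mul_mem_left _ _ (edgeBinomial_mem_binomialEdgePrime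
      (ConnectedComponent.exact hk))

theorem sModEq_binomialEdgePrime_of_linearCombination_eq {d d' : V ⊕ V →₀ ℕ}
    (hd : d ∈ supported ℕ ℕ (vertexVars Sᶜ)) (hd' : d' ∈ supported ℕ ℕ (vertexVars Sᶜ))
    (h : τ d = τ d') : monomial d (1 : K) ≡ monomial d' 1 [SMOD binomialEdgePrime K G S] := by
  obtain ⟨n, hn⟩ : ∃ n, d.degree + d'.degree = n := ⟨_, rfl⟩
  induction n using Nat.strong_induction_on generalizing d d' with
  | _ n ih =>
  wlog hx : ∃ i, d' (Sum.inl i) ≠ 0 generalizing d d'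
  · by_cases hx' : ∃ i, d (Sum.inl i) ≠ 0
    · exact (this hd' hd h.symm (by omega) hx').symm
    simp only [not_exists, not_not] at hx hx'
    suffices d = d' by rw [this]
    ext (v | v)
    · rw [hx v, hx' v]
    · have := congr($h (Sum.inr v))
      rwa [linearCombination_componentExp_inr, linearCombination_componentExp_inr, hx, hx',
        zero_add, zero_add] at this
  -- make `x_i` a common variable of both monomials, cancel it, and induct on the degree
  obtain ⟨i, hi⟩ := hx
  have hτ : ∀ w, componentExp G S (Sum.inl i) w ≠ 0 → τ d w ≠ 0 := fun w hw =>
    h ▸ Finsupp.linearCombination_apply_ne_zero_iff.2 ⟨_, hi, hw⟩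
  obtain ⟨d₁, hd₁, hdeg, hτ₁, hdd₁, hi₁⟩ := exists_sModEq_binomialEdgePrime_X_inl_ne_zero (K := K)
    (i := i) hd (hτ _ (by simp [componentExp])) (hτ _ (by simp [componentExp]))
  obtain ⟨f, rfl⟩ := Finsupp.exists_eq_add_single hi₁
  obtain ⟨f', rfl⟩ := Finsupp.exists_eq_add_single hi
  refine hdd₁.trans ?_
  rw [monomial_add_single, monomial_add_single]
  refine SModEq.mul (ih _ ?_ (Finsupp.mem_supported_of_le le_self_add hd₁)
    (Finsupp.mem_supported_of_le le_self_add hd') ?_ rfl) SModEq.rfl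
  · simp only [map_add, Finsupp.degree_single] at hdeg hn
    omega
  · simpa only [map_add, add_left_inj] using hτ₁.trans h

variable (K G S) in
theorem binomialEdgePrime_eq_ker :
    binomialEdgePrime K G S = RingHom.ker (monomialMap K (vertexVars Sᶜ) (componentExp G S)) :=
  (ker_monomialMap_eq (by simpa using binomialEdgePrime_le_ker LinearMap.id)
    (fun _ hz => X_mem_binomialEdgePrime G (by simpa [vertexVars] using hz))
    fun _ hd _ hd' h => sModEq_binomialEdgePrime_of_linearCombination_eq hd hd' h).symm

instance isPrime_binomialEdgePrime [IsDomain K] : (binomialEdgePrime K G S).IsPrime := by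
  rw [binomialEdgePrime_eq_ker]
  exact RingHom.ker_isPrime _

lemma binomialEdgePrime_le_of_isPrime {Q : Ideal (MvPolynomial (V ⊕ V) K)} [Q.IsPrime]
    (hJ : binomialEdgeIdeal K G ≤ Q) :
    binomialEdgePrime K G {v | X (Sum.inl v) ∈ Q ∧ X (Sum.inr v) ∈ Q} ≤ Q := by
  rw [binomialEdgePrime, Ideal.span_le]
  rintro f (⟨z | z, hz, rfl⟩ | ⟨i, j, ⟨w⟩, rfl⟩)
  · exact hz.1
  · exact hz.2
  induction w with
  | nil => simp [edgeBinomial_self]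
  | cons h _ ih =>
    exact edgeBinomial_mem_of_mem_of_mem (hJ (Ideal.subset_span ⟨_, _, h.1, rfl⟩)) ih h.2.2

lemma eq_binomialEdgePrime_of_mem_minimalPrimes [IsDomain K]
    {P : Ideal (MvPolynomial (V ⊕ V) K)} (hP : P ∈ (binomialEdgeIdeal K G).minimalPrimes) :
    P = binomialEdgePrime K G {v | X (Sum.inl v) ∈ P ∧ X (Sum.inr v) ∈ P} := by
  have := hP.1.1
  have hle := binomialEdgePrime_le_of_isPrime hP.1.2
  exact le_antisymm (hP.2 ⟨inferInstance, binomialEdgeIdeal_le_binomialEdgePrime G _⟩ hle) hle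

lemma binomialEdgePrime_diff_singleton_le {a : V} (ha : G.IsFreeVertex a) (haS : a ∈ S) :
    binomialEdgePrime K G (S \ {a}) ≤ binomialEdgePrime K G S := by
  refine Ideal.span_le.2 ?_
  rintro f (⟨z, hz, rfl⟩ | ⟨i, j, hr, rfl⟩)
  · exact X_mem_binomialEdgePrime G hz.1
  have hxa := X_mem_binomialEdgePrime (K := K) G (z := Sum.inl a) haS
  have hya := X_mem_binomialEdgePrime (K := K) G (z := Sum.inr a) haS
  obtain rfl | hi := eq_or_ne i a
  · exact edgeBinomial_mem_of_X_mem hxa hya j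
  obtain rfl | hj := eq_or_ne j a
  · rw [SetLike.mem_coe, ← neg_mem_iff, ← edgeBinomial_swap]
    exact edgeBinomial_mem_of_X_mem hxa hya i
  exact edgeBinomial_mem_binomialEdgePrime (reachable_isolate_of_isFreeVertex ha hr hi hj)

lemma notMem_of_mem_minimalPrimes_of_isFreeVertex [IsDomain K]
    {P : Ideal (MvPolynomial (V ⊕ V) K)} (hP : P ∈ (binomialEdgeIdeal K G).minimalPrimes) {a : V}
    (ha : G.IsFreeVertex a) : ¬(X (Sum.inl a) ∈ P ∧ X (Sum.inr a) ∈ P) := fun haP => by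
  have hle := (binomialEdgePrime_diff_singleton_le ha haP).trans
    (eq_binomialEdgePrime_of_mem_minimalPrimes hP).ge
  exact X_inl_notMem_binomialEdgePrime G (fun h => h.2 rfl)
    (hP.2 ⟨inferInstance, binomialEdgeIdeal_le_binomialEdgePrime G _⟩ hle haP.1)

end BinomialEdgePrime

section Glue

variable {α β : Type*}

/-- On monomials, `glue p q a b` substitutes `s_q ↦ s_p t_a` and `s_p ↦ s_p t_b`
(`s = X ∘ Sum.inl`, `t = X ∘ Sum.inr`), so that `s_p t_a` and `s_q t_b` both become
`s_p t_a t_b`. -/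
noncomputable def glue (p q : α) (a b : β) : (α ⊕ β →₀ ℕ) →ₗ[ℕ] (α ⊕ β →₀ ℕ) :=
  AddMonoidHom.toNatLinearMap
    { toFun u := u.erase (Sum.inl q) +
        u (Sum.inl q) • (single (Sum.inl p) 1 + single (Sum.inr a) 1) +
        u (Sum.inl p) • single (Sum.inr b) 1
      map_zero' := by simp
      map_add' u v := by simp only [Finsupp.erase_add, Finsupp.add_apply, add_smul]; abel }

variable {p q : α} {a b : β}

lemma glue_apply_inl_left (hpq : p ≠ q) (u : α ⊕ β →₀ ℕ) :
    glue p q a b u (Sum.inl p) = u (Sum.inl p) + u (Sum.inl q) := by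
  simp [glue, hpq]

lemma glue_apply_inr_left (hab : a ≠ b) (u : α ⊕ β →₀ ℕ) :
    glue p q a b u (Sum.inr a) = u (Sum.inr a) + u (Sum.inl q) := by
  simp [glue, hab]

lemma glue_single_add_single (hpq : p ≠ q) :
    glue p q a b (single (Sum.inl p) 1 + single (Sum.inr a) 1) =
      glue p q a b (single (Sum.inl q) 1 + single (Sum.inr b) 1) := by
  classical
  ext (c | c) <;> simp [glue, Finsupp.single_apply, hpq, hpq.symm]
  omega

lemma eq_of_glue_eq (hpq : p ≠ q) {u u' : α ⊕ β →₀ ℕ} (h : glue p q a b u = glue p q a b u')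
    (hp : u (Sum.inl p) = u' (Sum.inl p)) : u = u' := by
  classical
  have hq : u (Sum.inl q) = u' (Sum.inl q) := by
    have := congr($h (Sum.inl p))
    rw [glue_apply_inl_left hpq, glue_apply_inl_left hpq] at this
    omega
  ext (c | c)
  · obtain rfl | hc := eq_or_ne c q
    · exact hq
    have := congr($h (Sum.inl c))
    simp only [glue] at this
    simp [Finsupp.single_apply, hc] at this
    split_ifs at this <;> omega
  · have := congr($h (Sum.inr c))
    simp [glue, Finsupp.single_apply] at this
    split_ifs at this <;> omega

end Glue

section Glued

open SimpleGraph

variable {V K : Type*} [CommRing K] {G : SimpleGraph V} {S : Set V} {a b : V}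

local notation "cc" => SimpleGraph.connectedComponentMk (G.isolate S)
local notation "τ" => linearCombination ℕ (componentExp G S)
local notation "γ" => glue (cc a) (cc b) a b

lemma exists_sModEq_glue_eq_of_lt (hab : ¬(G.isolate S).Reachable a b) (hb : b ∉ S)
    {d d' : V ⊕ V →₀ ℕ} (hd : d ∈ supported ℕ ℕ (vertexVars Sᶜ)) (h : γ (τ d) = γ (τ d'))
    (hlt : τ d' (Sum.inl (cc a)) < τ d (Sum.inl (cc a))) :
    ∃ e ∈ supported ℕ ℕ (vertexVars Sᶜ), γ (τ e) = γ (τ d) ∧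
      τ e (Sum.inl (cc a)) + 1 = τ d (Sum.inl (cc a)) ∧
      monomial d (1 : K) ≡ monomial e 1
        [SMOD binomialEdgePrime K G S + Ideal.span {X (Sum.inl a) - X (Sum.inl b)}] := by
  have hne : cc a ≠ cc b := fun h => hab (ConnectedComponent.exact h)
  have hab' : a ≠ b := by rintro rfl; exact hab (Reachable.refl a)
  have hCa := congr($h (Sum.inl (cc a)))
  have hta := congr($h (Sum.inr a))
  rw [glue_apply_inl_left hne, glue_apply_inl_left hne] at hCa
  rw [glue_apply_inr_left hab', glue_apply_inr_left hab'] at hta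
  have hC : τ d (Sum.inl (cc a)) ≠ 0 := by omega
  have ha : τ d (Sum.inr a) ≠ 0 := by omega
  -- first make `x_a` a variable of `d`, then trade it for `x_b`
  obtain ⟨d₁, hd₁, -, hτ₁, hdd₁, ha₁⟩ :=
    exists_sModEq_binomialEdgePrime_X_inl_ne_zero (K := K) hd hC ha
  obtain ⟨f, rfl⟩ := Finsupp.exists_eq_add_single ha₁
  refine ⟨f + single (Sum.inl b) 1, add_mem (Finsupp.mem_supported_of_le le_self_add hd₁)
    (Finsupp.single_mem_supported ℕ 1 hb), ?_, ?_, ?_⟩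
  · rw [← hτ₁, map_add, map_add, map_add, map_add, Finsupp.linearCombination_single,
      Finsupp.linearCombination_single, one_smul, one_smul, componentExp_inl, componentExp_inl,
      glue_single_add_single hne]
  · rw [← hτ₁]
    simp [componentExp, hne.symm]
  · refine (hdd₁.mono le_sup_left).trans ?_
    rw [SModEq.sub_mem, monomial_add_single, monomial_add_single, pow_one, pow_one, ← mul_sub]
    exact Ideal.mul_mem_left _ _ (Ideal.mem_sup_right (Ideal.subset_span rfl))

theorem sModEq_binomialEdgePrime_add_of_glue_eq (hab : ¬(G.isolate S).Reachable a b) (hb : b ∉ S)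
    {d d' : V ⊕ V →₀ ℕ} (hd : d ∈ supported ℕ ℕ (vertexVars Sᶜ))
    (hd' : d' ∈ supported ℕ ℕ (vertexVars Sᶜ)) (h : γ (τ d) = γ (τ d')) :
    monomial d (1 : K) ≡ monomial d' 1
      [SMOD binomialEdgePrime K G S + Ideal.span {X (Sum.inl a) - X (Sum.inl b)}] := by
  obtain ⟨n, hn⟩ : ∃ n, τ d (Sum.inl (cc a)) + τ d' (Sum.inl (cc a)) = n := ⟨_, rfl⟩
  induction n using Nat.strong_induction_on generalizing d d' with
  | _ n ih =>
  wlog hle : τ d' (Sum.inl (cc a)) ≤ τ d (Sum.inl (cc a)) generalizing d d'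
  · exact (this hd' hd h.symm (by omega) (by omega)).symm
  obtain heq | hlt := hle.eq_or_lt
  · exact (sModEq_binomialEdgePrime_of_linearCombination_eq hd hd'
      (eq_of_glue_eq (fun h => hab (ConnectedComponent.exact h)) h heq.symm)).mono le_sup_left
  obtain ⟨e, he, hτe, hwt, hde⟩ := exists_sModEq_glue_eq_of_lt (K := K) hab hb hd h hlt
  exact hde.trans (ih _ (by omega) he hd' (hτe.trans h) rfl)

theorem isPrime_binomialEdgePrime_add [IsDomain K] (hab : ¬(G.isolate S).Reachable a b)
    (ha : a ∉ S) (hb : b ∉ S) :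
    (binomialEdgePrime K G S + Ideal.span {X (Sum.inl a) - X (Sum.inl b)}).IsPrime := by
  have hI : binomialEdgePrime K G S + Ideal.span {X (Sum.inl a) - X (Sum.inl b)} ≤
      RingHom.ker (monomialMap K (vertexVars Sᶜ) (γ ∘ componentExp G S)) := by
    refine sup_le (binomialEdgePrime_le_ker _) ?_
    rw [Ideal.span_le, Set.singleton_subset_iff, SetLike.mem_coe, RingHom.mem_ker, map_sub,
      monomialMap_X (show Sum.inl a ∈ vertexVars Sᶜ from ha),
      monomialMap_X (show Sum.inl b ∈ vertexVars Sᶜ from hb), sub_eq_zero, Function.comp_apply,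
      Function.comp_apply, componentExp_inl, componentExp_inl,
      glue_single_add_single fun h => hab (ConnectedComponent.exact h)]
  rw [← ker_monomialMap_eq hI (fun z hz => Ideal.mem_sup_left
    (X_mem_binomialEdgePrime G (by simpa [vertexVars] using hz))) fun d hd d' hd' h => ?_]
  · exact RingHom.ker_isPrime _
  rw [← LinearMap.map_finsupp_linearCombination, ← LinearMap.map_finsupp_linearCombination] at h
  exact sModEq_binomialEdgePrime_add_of_glue_eq hab hb hd hd' h

end Glued

/-- With `G₁` on `{1, …, n}`, `G₂` on `{n+1, …, n+m}`, `n` free in `G₁` and `n+m` free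
in `G₂`, for every minimal prime `P` of `J_{G'}` the ideal `P + (x_n - x_{n+m})` is
prime, where `G' = G₁ ⊔ G₂`. -/
theorem isPrime_minimalPrime_add_x_diff
    {n m : ℕ} (K : Type*) [Field K]
    (G₁ : SimpleGraph (Fin (n + 1))) (G₂ : SimpleGraph (Fin (m + 1)))
    (h₁ : G₁.IsFreeVertex (Fin.last n)) (h₂ : G₂.IsFreeVertex (Fin.last m)) :
    ∀ P ∈ (binomialEdgeIdeal K (G₁.sum G₂)).minimalPrimes,
      (P + Ideal.span {X (Sum.inl (Sum.inl (Fin.last n))) -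
        X (Sum.inl (Sum.inr (Fin.last m)))}).IsPrime := by
  intro P hP
  rw [eq_binomialEdgePrime_of_mem_minimalPrimes hP]
  exact isPrime_binomialEdgePrime_add
    (fun h => SimpleGraph.not_reachable_sum_inl_inr _ _ (h.mono (SimpleGraph.isolate_le _)))
    (notMem_of_mem_minimalPrimes_of_isFreeVertex hP h₁.sum_inl)
    (notMem_of_mem_minimalPrimes_of_isFreeVertex hP h₂.sum_inr)
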